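/- arXiv:1705.02005 — 6 statements merged into one kernel-verified Lean document; each statement's English description precedes it below -/
import Mathlib

section
/- Let M ∈ ℝ^{n×n} be symmetric positive definite and S a nonempty subset of [n]. Then (M_S)⁻¹ ⪯ (M⁻¹)_S in the Loewner order, where (M_S)⁻¹ denotes the matrix obtained by inverting the principal submatrix M_{SS} in place (embedding (M_{SS})⁻¹ back into the rows and columns indexed by S, with zeros elsewhere), and (M⁻¹)_S is the matrix obtained from M⁻¹ by zeroing out rows and columns outside S. -/
/-!
Since `M ≻ 0`, the block matrix `[[M, 1], [1, M⁻¹]]` is positive semidefinite: its Schur complement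
with respect to `M` is `M⁻¹ - M⁻¹ = 0`. Its principal submatrix on the rows and columns `S ⊔ S` is
`[[M_{SS}, 1], [1, (M⁻¹)_{SS}]]`, still positive semidefinite, and its Schur complement with respect
to the positive definite block `M_{SS}` is `(M⁻¹)_{SS} - (M_{SS})⁻¹`. Extending by zero preserves
positive semidefiniteness.
-/

open Matrix BigOperators Finset

noncomputable section

/-- `A_S`: zero out entries of `A` outside rows/columns indexed by `S`. -/
def zeroPad {n : ℕ} (A : Matrix (Fin n) (Fin n) ℝ) (S : Finset (Fin n)) :
    Matrix (Fin n) (Fin n) ℝ :=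
  Matrix.of fun i j => if i ∈ S ∧ j ∈ S then A i j else 0

/-- `(M_S)⁻¹`: invert the principal submatrix `M_{SS}` in place, zeros elsewhere. -/
def inPlaceInv {n : ℕ} (M : Matrix (Fin n) (Fin n) ℝ) (S : Finset (Fin n)) :
    Matrix (Fin n) (Fin n) ℝ :=
  Matrix.of fun i j =>
    if hi : i ∈ S then
      if hj : j ∈ S then
        (M.submatrix (fun a : {x // x ∈ S} => (a : Fin n))
            (fun a : {x // x ∈ S} => (a : Fin n)))⁻¹ ⟨i, hi⟩ ⟨j, hj⟩
      else 0
    else 0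

namespace Matrix

section SchurComplement

variable {m n K : Type*} [Fintype m] [Fintype n] [DecidableEq m] [DecidableEq n]
  [Field K] [PartialOrder K] [StarRing K] [StarOrderedRing K]

theorem PosDef.posSemidef_fromBlocks_one_one_inv {M : Matrix n n K} (hM : M.PosDef) :
    (fromBlocks M 1 1 M⁻¹).PosSemidef := by
  have := hM.isUnit.invertible
  have h := (hM.fromBlocks₁₁ (1 : Matrix n n K) M⁻¹).2 (by simpa using PosSemidef.zero)
  rwa [conjTranspose_one] at h

theorem PosDef.posSemidef_submatrix_inv_sub_inv_submatrix {M : Matrix n n K} (hM : M.PosDef)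
    {e : m → n} (he : Function.Injective e) :
    ((M⁻¹).submatrix e e - (M.submatrix e e)⁻¹).PosSemidef := by
  have hMe := hM.submatrix he
  have := hMe.isUnit.invertible
  have hBlocks : (fromBlocks (M.submatrix e e) 1 1 ((M⁻¹).submatrix e e)).PosSemidef := by
    convert hM.posSemidef_fromBlocks_one_one_inv.submatrix (Sum.map e e) using 1
    ext (i | i) (j | j) <;> simp [he.eq_iff, one_apply]
  simpa using (hMe.fromBlocks₁₁ (1 : Matrix m m K) _).1 (by simpa using hBlocks)

end SchurComplement

theorem PosSemidef.fromBlocks_zero_zero_zero {m n R : Type*} [Fintype m] [DecidableEq m]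
    [Finite n] [CommRing R] [PartialOrder R] [StarRing R] {D : Matrix m m R}
    (hD : D.PosSemidef) : (fromBlocks D 0 0 (0 : Matrix n n R)).PosSemidef := by
  convert hD.conjTranspose_mul_mul_same (fromCols (1 : Matrix m m R) (0 : Matrix m n R)) using 1
  rw [conjTranspose_fromCols_eq_fromRows_conjTranspose, fromRows_mul, fromRows_mul_fromCols]
  simp

section ExtendByZero

variable {ι R : Type*} [DecidableEq ι] (S : Finset ι)

def extendByZero [Zero R] (D : Matrix S S R) : Matrix ι ι R :=
  of fun i j => if hi : i ∈ S then if hj : j ∈ S then D ⟨i, hi⟩ ⟨j, hj⟩ else 0 else 0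

theorem extendByZero_sub [AddGroup R] (D E : Matrix S S R) :
    extendByZero S (D - E) = extendByZero S D - extendByZero S E := by
  ext i j
  by_cases hi : i ∈ S <;> by_cases hj : j ∈ S <;> simp [extendByZero, hi, hj]

theorem extendByZero_eq_submatrix_fromBlocks [Zero R] (D : Matrix S S R) :
    extendByZero S D = (fromBlocks D 0 0 (0 : Matrix {i // i ∉ S} {i // i ∉ S} R)).submatrix
      (Equiv.sumCompl (· ∈ S)).symm (Equiv.sumCompl (· ∈ S)).symm := by
  ext i j
  by_cases hi : i ∈ S <;> by_cases hj : j ∈ S <;>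
    simp [extendByZero, hi, hj, Equiv.sumCompl_symm_apply_of_pos, Equiv.sumCompl_symm_apply_of_neg]

theorem PosSemidef.extendByZero [Fintype ι] [CommRing R] [PartialOrder R] [StarRing R]
    {D : Matrix S S R} (hD : D.PosSemidef) : (extendByZero S D).PosSemidef := by
  rw [extendByZero_eq_submatrix_fromBlocks]
  exact hD.fromBlocks_zero_zero_zero.submatrix _

end ExtendByZero

end Matrix

theorem zeroPad_eq_extendByZero {n : ℕ} (A : Matrix (Fin n) (Fin n) ℝ) (S : Finset (Fin n)) :
    zeroPad A S = extendByZero S (A.submatrix Subtype.val Subtype.val) := by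
  ext i j
  by_cases hi : i ∈ S <;> by_cases hj : j ∈ S <;> simp [zeroPad, extendByZero, hi, hj]

theorem stmt2_general {n : ℕ} (M : Matrix (Fin n) (Fin n) ℝ) (hM : M.PosDef)
    (S : Finset (Fin n)) :
    (zeroPad M⁻¹ S - inPlaceInv M S).PosSemidef := by
  have hPad : zeroPad M⁻¹ S - inPlaceInv M S =
      extendByZero S ((M⁻¹).submatrix Subtype.val Subtype.val -
        (M.submatrix Subtype.val Subtype.val)⁻¹) := by
    rw [extendByZero_sub, zeroPad_eq_extendByZero]
    rfl
  rw [hPad]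
  exact (hM.posSemidef_submatrix_inv_sub_inv_submatrix Subtype.val_injective).extendByZero S

/-- For `M ≻ 0` and `S ≠ ∅`, `(M_S)⁻¹ ⪯ (M⁻¹)_S` in the Loewner order. -/
theorem stmt2 {n : ℕ} (M : Matrix (Fin n) (Fin n) ℝ) (hM : M.PosDef)
    (S : Finset (Fin n)) (hS : S.Nonempty) :
    (zeroPad M⁻¹ S - inPlaceInv M S).PosSemidef :=
  stmt2_general M hM S
end
end

section
/- Let X ∈ ℝ^{n×n} be symmetric positive definite and S' ⊆ S ⊆ [n] with S' nonempty. Then (X_{S'})⁻¹ ⪯ (X_S)⁻¹ in the Loewner order, where (X_T)⁻¹ := I_{:T}(X_{TT})⁻¹ I_{:T}ᵀ denotes the in-place inverse of the principal submatrix indexed by T. -/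
/-!
Write `P_T = I_{:T} (X_{TT})⁻¹ I_{:T}ᵀ`. Since `I_{:T}ᵀ X I_{:T} = X_{TT}`, the matrix `P_S X` fixes
every column of `I_{:S}`, hence every column of `I_{:S'}` when `S' ⊆ S`; that is,
`P_S X P_{S'} = P_{S'}`, and by symmetry also `P_{S'} X P_S = P_{S'}`. Together with
`P_S X P_S = P_S` this gives `D X D = D` for the symmetric matrix `D = P_S - P_{S'}`, so
`D = Dᵀ X D ⪰ 0`.
-/

open Matrix BigOperators Finset

noncomputable section

namespace Matrix

section CompressedInv

variable {R m n k : Type*} [CommRing R] [StarRing R] [Fintype n] [Fintype m] [DecidableEq m]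

/-- `compressedInv X E * X` is the projection onto the column space of `E` along the
`X`-orthogonal complement of that space. -/
def compressedInv (X : Matrix n n R) (E : Matrix n m R) : Matrix n n R :=
  E * (Eᴴ * X * E)⁻¹ * Eᴴ

theorem compressedInv_mul_mul_mul (X : Matrix n n R) {E : Matrix n m R}
    (hE : IsUnit (Eᴴ * X * E).det) (J : Matrix m k R) :
    compressedInv X E * X * (E * J) = E * J :=
  calc compressedInv X E * X * (E * J) = E * ((Eᴴ * X * E)⁻¹ * (Eᴴ * X * E)) * J := by
        simp only [compressedInv, Matrix.mul_assoc]
    _ = E * J := by rw [nonsing_inv_mul _ hE, Matrix.mul_one]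

theorem compressedInv_mul_mul_compressedInv_mul [Fintype k] [DecidableEq k] (X : Matrix n n R)
    {E : Matrix n m R} (hE : IsUnit (Eᴴ * X * E).det) (J : Matrix m k R) :
    compressedInv X E * X * compressedInv X (E * J) = compressedInv X (E * J) := by
  simpa only [compressedInv, Matrix.mul_assoc] using
    congrArg (· * (((E * J)ᴴ * X * (E * J))⁻¹ * (E * J)ᴴ)) (compressedInv_mul_mul_mul X hE J)

theorem compressedInv_mul_mul_self (X : Matrix n n R) {E : Matrix n m R}
    (hE : IsUnit (Eᴴ * X * E).det) :
    compressedInv X E * X * compressedInv X E = compressedInv X E := by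
  simpa only [Matrix.mul_one] using
    compressedInv_mul_mul_compressedInv_mul X hE (1 : Matrix m m R)

theorem isHermitian_compressedInv {X : Matrix n n R} (hX : X.IsHermitian) (E : Matrix n m R) :
    (compressedInv X E).IsHermitian :=
  isHermitian_mul_mul_conjTranspose E (isHermitian_conjTranspose_mul_mul E hX).inv

theorem posSemidef_compressedInv_sub_compressedInv_mul [PartialOrder R] [Fintype k]
    [DecidableEq k] {X : Matrix n n R} (hX : X.PosSemidef) {E : Matrix n m R} {J : Matrix m k R}
    (hE : IsUnit (Eᴴ * X * E).det) (hEJ : IsUnit ((E * J)ᴴ * X * (E * J)).det) :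
    (compressedInv X E - compressedInv X (E * J)).PosSemidef := by
  set P := compressedInv X E
  set Q := compressedInv X (E * J)
  have hP : P.IsHermitian := isHermitian_compressedInv hX.1 E
  have hQ : Q.IsHermitian := isHermitian_compressedInv hX.1 (E * J)
  have hPQ : P * X * Q = Q := compressedInv_mul_mul_compressedInv_mul X hE J
  have hQP : Q * X * P = Q := by
    simpa only [conjTranspose_mul, hP.eq, hQ.eq, hX.1.eq, Matrix.mul_assoc] using
      congrArg conjTranspose hPQ
  have hD : (P - Q)ᴴ * X * (P - Q) = P - Q := by
    rw [(hP.sub hQ).eq, Matrix.sub_mul, Matrix.sub_mul, Matrix.mul_sub, Matrix.mul_sub,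
      compressedInv_mul_mul_self X hE, hPQ, hQP, compressedInv_mul_mul_self X hEJ]
    abel
  exact hD ▸ hX.conjTranspose_mul_mul_same (P - Q)

end CompressedInv

section Selection

variable {ι R o : Type*} [DecidableEq ι] [Semiring R]

variable (R) in
def selection (T : Finset ι) : Matrix ι T R :=
  (1 : Matrix ι ι R).submatrix id (↑)

theorem selection_mul_apply {T : Finset ι} (B : Matrix T o R) (i : ι) (b : o) :
    (selection R T * B) i b = if h : i ∈ T then B ⟨i, h⟩ b else 0 := by
  split_ifs with hi
  · rw [mul_apply, Fintype.sum_eq_single ⟨i, hi⟩] <;> aesop (add simp [selection, one_apply])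
  · rw [mul_apply, Fintype.sum_eq_zero]
    aesop (add simp [selection, one_apply])

theorem mul_conjTranspose_selection_apply [StarRing R] {T : Finset ι} (B : Matrix o T R) (a : o)
    (j : ι) : (B * (selection R T)ᴴ) a j = if h : j ∈ T then B a ⟨j, h⟩ else 0 := by
  rw [← conjTranspose_conjTranspose (B * _), conjTranspose_apply, conjTranspose_mul,
    conjTranspose_conjTranspose, selection_mul_apply]
  split_ifs <;> simp

theorem conjTranspose_selection_mul_mul_selection [Fintype ι] [StarRing R] (X : Matrix ι ι R)
    (T : Finset ι) : (selection R T)ᴴ * X * selection R T = X.submatrix (↑) (↑) := by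
  ext a b
  simp [selection, mul_apply, one_apply]

theorem selection_mul_one_submatrix {S' S : Finset ι} (hsub : S' ⊆ S) :
    selection R S * ((1 : Matrix ι ι R).submatrix (↑) (↑) : Matrix S S' R) = selection R S' := by
  ext i b
  rw [selection_mul_apply]
  split_ifs with hi
  · rfl
  · have : i ≠ b := fun h => hi (h ▸ hsub b.2)
    simp [selection, this]

end Selection

end Matrix

theorem inPlaceInv_eq_compressedInv {n : ℕ} (X : Matrix (Fin n) (Fin n) ℝ) (T : Finset (Fin n)) :
    inPlaceInv X T = compressedInv X (selection ℝ T) := by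
  ext i j
  rw [compressedInv, conjTranspose_selection_mul_mul_selection, mul_conjTranspose_selection_apply]
  simp only [selection_mul_apply, inPlaceInv, of_apply]
  split_ifs <;> rfl

theorem stmt3_general {n : ℕ} (X : Matrix (Fin n) (Fin n) ℝ) (hX : X.PosDef)
    (S' S : Finset (Fin n)) (hsub : S' ⊆ S) :
    (inPlaceInv X S - inPlaceInv X S').PosSemidef := by
  have hunit (T : Finset (Fin n)) : IsUnit ((selection ℝ T)ᴴ * X * selection ℝ T).det := by
    rw [conjTranspose_selection_mul_mul_selection]
    exact (isUnit_iff_isUnit_det _).mp (hX.submatrix Subtype.val_injective).isUnit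
  rw [inPlaceInv_eq_compressedInv, inPlaceInv_eq_compressedInv,
    ← selection_mul_one_submatrix hsub]
  refine posSemidef_compressedInv_sub_compressedInv_mul hX.posSemidef (hunit S) ?_
  rw [selection_mul_one_submatrix hsub]
  exact hunit S'

/-- For `X ≻ 0` and `∅ ≠ S' ⊆ S`, `(X_{S'})⁻¹ ⪯ (X_S)⁻¹` in the Loewner order. -/
theorem stmt3 {n : ℕ} (X : Matrix (Fin n) (Fin n) ℝ) (hX : X.PosDef)
    (S' S : Finset (Fin n)) (hS' : S'.Nonempty) (hsub : S' ⊆ S) :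
    (inPlaceInv X S - inPlaceInv X S').PosSemidef :=
  stmt3_general X hX S' S hsub
end
end

section
/- Let G ⪯ M be symmetric positive definite n×n matrices and Ŝ a proper non-vacuous random subset of [n]. Define σ₁ = λ_min(G^{1/2} E[(M_Ŝ)⁻¹] G^{1/2}) and θ = λ_max(G^{1/2} E[(M_Ŝ)⁻¹] G^{1/2}). Then 0 ≤ σ₁ ≤ θ ≤ 1. -/
open Matrix BigOperators Finset

noncomputable section

open scoped ComplexOrder in
/-- The square root of a positive semidefinite matrix, as defined in the older Mathlib
(removed since): `U * diagonal (√ eigenvalues) * Uᴴ`. -/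
def Matrix.PosSemidef.sqrt {n 𝕜 : Type*} [Fintype n] [DecidableEq n] [RCLike 𝕜]
    {A : Matrix n n 𝕜} (hA : A.PosSemidef) : Matrix n n 𝕜 :=
  hA.1.eigenvectorUnitary.1 * diagonal ((↑) ∘ (√·) ∘ hA.1.eigenvalues) *
    (star hA.1.eigenvectorUnitary : Matrix n n 𝕜)

/-! With `R = G^{1/2}`, each `N = (M_S)⁻¹` is a compression `E (Eᵀ M E)⁻¹ Eᵀ`, hence
`N M N = N`. For `P = R N R` this gives `P - P² = (N R)ᵀ (M - G) (N R) ⪰ 0`, and a Hermitian `P`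
with `P² ⪯ P` satisfies `0 ⪯ P ⪯ 1` (both `P` and `1 - P` are `P - P²` plus a Gram matrix).
Averaging over `S` gives `0 ⪯ X ⪯ 1`, so the spectrum of `X` lies in `[0, 1]`. -/

namespace Matrix

open scoped ComplexOrder

variable {ι κ 𝕜 : Type*} [RCLike 𝕜]

lemma nonsing_inv_mul_self_mul_nonsing_inv {α : Type*} [CommRing α] [Fintype κ] [DecidableEq κ]
    (A : Matrix κ κ α) : A⁻¹ * A * A⁻¹ = A⁻¹ := by
  by_cases h : IsUnit A.det
  · rw [nonsing_inv_mul _ h, Matrix.one_mul]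
  · simp [nonsing_inv_apply_not_isUnit _ h]

lemma posSemidef_and_posSemidef_one_sub_sum_smul [DecidableEq ι] {α : Type*} (s : Finset α)
    {A : α → Matrix ι ι 𝕜} {w : α → ℝ} (hA : ∀ a ∈ s, (A a).PosSemidef ∧ (1 - A a).PosSemidef)
    (hw0 : ∀ a ∈ s, 0 ≤ w a) (hw1 : ∑ a ∈ s, w a = 1) :
    (∑ a ∈ s, w a • A a).PosSemidef ∧ (1 - ∑ a ∈ s, w a • A a).PosSemidef := by
  have h1 : 1 - ∑ a ∈ s, w a • A a = ∑ a ∈ s, w a • (1 - A a) := by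
    simp only [smul_sub, Finset.sum_sub_distrib, ← Finset.sum_smul, hw1, one_smul]
  rw [h1]
  exact ⟨posSemidef_sum s fun a ha => (hA a ha).1.smul (hw0 a ha),
    posSemidef_sum s fun a ha => (hA a ha).2.smul (hw0 a ha)⟩

variable [Fintype ι]

section Compression

variable [Fintype κ] [DecidableEq κ]

lemma isHermitian_mul_inv_conj_mul {M : Matrix ι ι 𝕜} (hM : M.IsHermitian) (E : Matrix ι κ 𝕜) :
    (E * (Eᴴ * M * E)⁻¹ * Eᴴ).IsHermitian :=
  isHermitian_mul_mul_conjTranspose E (isHermitian_conjTranspose_mul_mul E hM).inv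

lemma mul_inv_conj_mul_mul_self (M : Matrix ι ι 𝕜) (E : Matrix ι κ 𝕜) :
    E * (Eᴴ * M * E)⁻¹ * Eᴴ * M * (E * (Eᴴ * M * E)⁻¹ * Eᴴ) = E * (Eᴴ * M * E)⁻¹ * Eᴴ := by
  calc _ = E * ((Eᴴ * M * E)⁻¹ * (Eᴴ * M * E) * (Eᴴ * M * E)⁻¹) * Eᴴ := by
        simp only [Matrix.mul_assoc]
    _ = _ := by rw [nonsing_inv_mul_self_mul_nonsing_inv]

end Compression

lemma conjTranspose_mul_mul_sub_mul_self {N M : Matrix ι ι 𝕜} (hN : N.IsHermitian)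
    (hNMN : N * M * N = N) (R : Matrix ι ι 𝕜) :
    Rᴴ * N * R - (Rᴴ * N * R) * (Rᴴ * N * R) = (N * R)ᴴ * (M - R * Rᴴ) * (N * R) := by
  have hNMNR : N * (M * (N * R)) = N * R := by
    rw [← Matrix.mul_assoc, ← Matrix.mul_assoc, hNMN]
  rw [conjTranspose_mul, hN.eq, Matrix.mul_sub, Matrix.sub_mul]
  simp only [Matrix.mul_assoc, hNMNR]

variable [DecidableEq ι]

lemma PosSemidef.isHermitian_sqrt {A : Matrix ι ι 𝕜} (hA : A.PosSemidef) :
    hA.sqrt.IsHermitian := by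
  have hD : star (RCLike.ofReal ∘ (√·) ∘ hA.1.eigenvalues : ι → 𝕜) =
      RCLike.ofReal ∘ (√·) ∘ hA.1.eigenvalues := by
    ext; simp
  simp [IsHermitian, PosSemidef.sqrt, conjTranspose_mul, Matrix.mul_assoc, diagonal_conjTranspose,
    hD, star_eq_conjTranspose]

lemma PosSemidef.sqrt_mul_self {A : Matrix ι ι 𝕜} (hA : A.PosSemidef) :
    hA.sqrt * hA.sqrt = A := by
  conv_rhs => rw [hA.1.spectral_theorem, Unitary.conjStarAlgAut_apply]
  simp only [PosSemidef.sqrt, Matrix.mul_assoc]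
  rw [← Matrix.mul_assoc (star _), Unitary.coe_star_mul_self, Matrix.one_mul,
    ← Matrix.mul_assoc (diagonal _), diagonal_mul_diagonal]
  congr 3
  ext i
  simp [← RCLike.ofReal_mul, Real.mul_self_sqrt (hA.eigenvalues_nonneg i)]

lemma posSemidef_and_posSemidef_one_sub_of_posSemidef_sub_mul_self {P : Matrix ι ι 𝕜}
    (hP : P.IsHermitian) (h : (P - P * P).PosSemidef) :
    P.PosSemidef ∧ (1 - P).PosSemidef := by
  constructor
  · simpa [hP.eq] using h.add (posSemidef_conjTranspose_mul_self P)
  · convert h.add (posSemidef_conjTranspose_mul_self (1 - P)) using 1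
    rw [conjTranspose_sub, conjTranspose_one, hP.eq]
    noncomm_ring

lemma posSemidef_conjTranspose_mul_mul_and_one_sub {N M R : Matrix ι ι 𝕜} (hN : N.IsHermitian)
    (hNMN : N * M * N = N) (hRM : (M - R * Rᴴ).PosSemidef) :
    (Rᴴ * N * R).PosSemidef ∧ (1 - Rᴴ * N * R).PosSemidef := by
  refine posSemidef_and_posSemidef_one_sub_of_posSemidef_sub_mul_self
    (isHermitian_conjTranspose_mul_mul R hN) ?_
  rw [conjTranspose_mul_mul_sub_mul_self hN hNMN]
  exact hRM.conjTranspose_mul_mul_same _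

lemma IsHermitian.eigenvalues_le_one {A : Matrix ι ι 𝕜} (hA : A.IsHermitian)
    (h : (1 - A).PosSemidef) (i : ι) : hA.eigenvalues i ≤ 1 := by
  have hv := h.re_dotProduct_nonneg (hA.eigenvectorBasis i)
  have hnorm : star ⇑(hA.eigenvectorBasis i) ⬝ᵥ ⇑(hA.eigenvectorBasis i) = 1 := by
    rw [dotProduct_comm, ← EuclideanSpace.inner_eq_star_dotProduct, inner_self_eq_norm_sq_to_K,
      hA.eigenvectorBasis.orthonormal.1 i]
    simp
  rw [sub_mulVec, one_mulVec, dotProduct_sub, map_sub, hnorm, RCLike.one_re,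
    ← hA.eigenvalues_eq] at hv
  linarith

end Matrix

lemma Real.iInf_le_iSup_of_finite {ι : Type*} [Finite ι] (f : ι → ℝ) :
    ⨅ i, f i ≤ ⨆ i, f i := by
  rcases isEmpty_or_nonempty ι with _ | _
  · simp [Real.iInf_of_isEmpty, Real.iSup_of_isEmpty]
  · exact ciInf_le_ciSup (Set.finite_range f).bddBelow (Set.finite_range f).bddAbove

section InPlaceInv

variable {n : ℕ}

lemma exists_inPlaceInv_eq_mul_inv_conj_mul (M : Matrix (Fin n) (Fin n) ℝ)
    (S : Finset (Fin n)) : ∃ E : Matrix (Fin n) S ℝ, inPlaceInv M S = E * (Eᴴ * M * E)⁻¹ * Eᴴ := by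
  set E := (1 : Matrix (Fin n) (Fin n) ℝ).submatrix id ((↑) : S → Fin n)
  have hE : Eᴴ = (1 : Matrix (Fin n) (Fin n) ℝ).submatrix ((↑) : S → Fin n) id := by simp [E]
  have hEME : Eᴴ * M * E = M.submatrix ((↑) : S → Fin n) ((↑) : S → Fin n) := by
    ext a b; simp [E, mul_apply, one_apply]
  refine ⟨E, ?_⟩
  rw [hEME, hE]
  ext i j
  rw [mul_apply]
  by_cases hi : i ∈ S
  · by_cases hj : j ∈ S
    · rw [Fintype.sum_eq_single ⟨j, hj⟩, mul_apply, Fintype.sum_eq_single ⟨i, hi⟩]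
      · simp [inPlaceInv, hi, hj, E, one_apply]
      all_goals intro a ha; simp [E, one_apply, Subtype.ext_iff] at ha ⊢; grind
    · rw [Finset.sum_eq_zero fun b _ => ?_]
      · simp [inPlaceInv, hj]
      simp [one_apply, ne_of_mem_of_not_mem b.2 hj]
  · rw [Finset.sum_eq_zero fun b _ => ?_]
    · simp [inPlaceInv, hi]
    simp [E, one_apply, mul_apply, fun a : S => (ne_of_mem_of_not_mem a.2 hi).symm]

lemma isHermitian_inPlaceInv {M : Matrix (Fin n) (Fin n) ℝ} (hM : M.IsHermitian)
    (S : Finset (Fin n)) : (inPlaceInv M S).IsHermitian := by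
  obtain ⟨E, hE⟩ := exists_inPlaceInv_eq_mul_inv_conj_mul M S
  exact hE ▸ isHermitian_mul_inv_conj_mul hM E

lemma inPlaceInv_mul_mul_self (M : Matrix (Fin n) (Fin n) ℝ) (S : Finset (Fin n)) :
    inPlaceInv M S * M * inPlaceInv M S = inPlaceInv M S := by
  obtain ⟨E, hE⟩ := exists_inPlaceInv_eq_mul_inv_conj_mul M S
  rw [hE]
  exact mul_inv_conj_mul_mul_self M E

end InPlaceInv

theorem stmt4_general {n : ℕ} (G M : Matrix (Fin n) (Fin n) ℝ)
    (hG : G.PosDef) (hGM : (M - G).PosSemidef)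
    (w : Finset (Fin n) → ℝ) (hw0 : ∀ S, 0 ≤ w S)
    (hw1 : ∑ S : Finset (Fin n), w S = 1)
    (X : Matrix (Fin n) (Fin n) ℝ)
    (hXdef : X = hG.posSemidef.sqrt *
      (∑ S : Finset (Fin n), w S • inPlaceInv M S) * hG.posSemidef.sqrt)
    (hX : X.IsHermitian) :
    0 ≤ (⨅ i, hX.eigenvalues i) ∧
      (⨅ i, hX.eigenvalues i) ≤ (⨆ i, hX.eigenvalues i) ∧
      (⨆ i, hX.eigenvalues i) ≤ 1 := by
  set R := hG.posSemidef.sqrt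
  have hR : Rᴴ = R := hG.posSemidef.isHermitian_sqrt
  have hM : M.IsHermitian := by simpa using hGM.1.add hG.1
  have hRM : (M - R * Rᴴ).PosSemidef := by rwa [hR, hG.posSemidef.sqrt_mul_self]
  have hXsum : X = ∑ S, w S • (R * inPlaceInv M S * R) := by
    simp only [hXdef, Finset.mul_sum, Finset.sum_mul, mul_smul_comm, smul_mul_assoc]
  obtain ⟨hX0, hX1⟩ : X.PosSemidef ∧ (1 - X).PosSemidef := by
    rw [hXsum]
    refine posSemidef_and_posSemidef_one_sub_sum_smul _ (fun S _ => ?_) (fun S _ => hw0 S) hw1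
    simpa only [hR] using posSemidef_conjTranspose_mul_mul_and_one_sub (isHermitian_inPlaceInv hM S)
      (inPlaceInv_mul_mul_self M S) hRM
  exact ⟨Real.iInf_nonneg hX0.eigenvalues_nonneg, Real.iInf_le_iSup_of_finite _,
    Real.iSup_le (hX.eigenvalues_le_one hX1) zero_le_one⟩

/-- For `0 ≺ G ⪯ M` and a proper non-vacuous sampling `Ŝ` (weight `w`),
with `σ₁ = λmin(G^{1/2} E[(M_Ŝ)⁻¹] G^{1/2})` and `θ = λmax` of the same matrix:
`0 ≤ σ₁ ≤ θ ≤ 1`. -/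
theorem stmt4 {n : ℕ} (hn : 0 < n) (G M : Matrix (Fin n) (Fin n) ℝ)
    (hG : G.PosDef) (hM : M.PosDef) (hGM : (M - G).PosSemidef)
    (w : Finset (Fin n) → ℝ) (hw0 : ∀ S, 0 ≤ w S)
    (hw1 : ∑ S : Finset (Fin n), w S = 1) (hvac : w ∅ = 0)
    (hprop : ∀ i : Fin n,
      0 < ∑ S ∈ Finset.univ.filter (fun S : Finset (Fin n) => i ∈ S), w S)
    (X : Matrix (Fin n) (Fin n) ℝ)
    (hXdef : X = hG.posSemidef.sqrt *
      (∑ S : Finset (Fin n), w S • inPlaceInv M S) * hG.posSemidef.sqrt)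
    (hX : X.IsHermitian) :
    0 ≤ (⨅ i, hX.eigenvalues i) ∧
      (⨅ i, hX.eigenvalues i) ≤ (⨆ i, hX.eigenvalues i) ∧
      (⨆ i, hX.eigenvalues i) ≤ 1 :=
  stmt4_general G M hG hGM w hw0 hw1 X hXdef hX
end
end

section
/- Let f: ℝⁿ → ℝ be differentiable with positive definite matrices G ⪯ M such that f(x)+⟨∇f(x),h⟩+½⟨h,Gh⟩ ≤ f(x+h) ≤ f(x)+⟨∇f(x),h⟩+½⟨h,Mh⟩ for all x,h. Let x* be the minimizer of f. Then for all x, f(x) − f(x*) ≤ ½⟨∇f(x), G⁻¹∇f(x)⟩. -/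
/-!
Apply the strong convexity lower bound at `x` with step `h = x* - x`: then
`f x* ≥ f x + ⟨∇f(x), h⟩ + ½⟨h, G h⟩`, and the right-hand quadratic in `h` is minimised at
`h = -G⁻¹∇f(x)`, where it equals `f x - ½⟨∇f(x), G⁻¹∇f(x)⟩`.
-/

open Matrix BigOperators Finset

noncomputable section

namespace Matrix

variable {ι : Type*} [Fintype ι] [DecidableEq ι] {G : Matrix ι ι ℝ}

lemma PosDef.dotProduct_mulVec_add_inv_mulVec (hG : G.PosDef) (g h : ι → ℝ) :
    (h + G⁻¹ *ᵥ g) ⬝ᵥ (G *ᵥ (h + G⁻¹ *ᵥ g)) =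
      h ⬝ᵥ (G *ᵥ h) + 2 * (g ⬝ᵥ h) + g ⬝ᵥ (G⁻¹ *ᵥ g) := by
  have hGinv : G *ᵥ (G⁻¹ *ᵥ g) = g := by
    rw [mulVec_mulVec, mul_nonsing_inv G (isUnit_iff_ne_zero.mpr hG.det_pos.ne'), one_mulVec]
  have hcross : (G⁻¹ *ᵥ g) ⬝ᵥ (G *ᵥ h) = g ⬝ᵥ h := by
    rw [dotProduct_mulVec, ← mulVec_transpose, show Gᵀ = G from hG.isHermitian, hGinv]
  simp only [mulVec_add, dotProduct_add, add_dotProduct, hGinv, hcross,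
    dotProduct_comm h g, dotProduct_comm (G⁻¹ *ᵥ g) g]
  ring

lemma PosDef.neg_half_dotProduct_inv_mulVec_le (hG : G.PosDef) (g h : ι → ℝ) :
    -((1 / 2) * (g ⬝ᵥ (G⁻¹ *ᵥ g))) ≤ g ⬝ᵥ h + (1 / 2) * (h ⬝ᵥ (G *ᵥ h)) := by
  have hsq := hG.posSemidef.dotProduct_mulVec_nonneg (h + G⁻¹ *ᵥ g)
  rw [star_trivial, hG.dotProduct_mulVec_add_inv_mulVec] at hsq
  linarith

end Matrix

theorem stmt5_general {n : ℕ} (f : (Fin n → ℝ) → ℝ) (g : (Fin n → ℝ) → (Fin n → ℝ))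
    (G : Matrix (Fin n) (Fin n) ℝ) (hG : G.PosDef)
    (hlower : ∀ x h, f x + (g x ⬝ᵥ h) + (1/2) * (h ⬝ᵥ (G *ᵥ h)) ≤ f (x + h))
    (xstar : Fin n → ℝ) :
    ∀ x, f x - f xstar ≤ (1/2) * (g x ⬝ᵥ (G⁻¹ *ᵥ g x)) := by
  intro x
  have hstep := hlower x (xstar - x)
  rw [add_sub_cancel] at hstep
  linarith [hG.neg_half_dotProduct_inv_mulVec_le (g x) (xstar - x)]

/-- Strong convexity with matrix `G` (and smoothness with `M`) imply
`f(x) - f(x*) ≤ ½⟨∇f(x), G⁻¹ ∇f(x)⟩`. -/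
theorem stmt5 {n : ℕ} (f : (Fin n → ℝ) → ℝ) (g : (Fin n → ℝ) → (Fin n → ℝ))
    (G M : Matrix (Fin n) (Fin n) ℝ) (hG : G.PosDef) (hM : M.PosDef)
    (hGM : (M - G).PosSemidef)
    (hlower : ∀ x h, f x + (g x ⬝ᵥ h) + (1/2) * (h ⬝ᵥ (G *ᵥ h)) ≤ f (x + h))
    (hupper : ∀ x h, f (x + h) ≤ f x + (g x ⬝ᵥ h) + (1/2) * (h ⬝ᵥ (M *ᵥ h)))
    (xstar : Fin n → ℝ) (hstar : ∀ y, f xstar ≤ f y) :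
    ∀ x, f x - f xstar ≤ (1/2) * (g x ⬝ᵥ (G⁻¹ *ᵥ g x)) :=
  stmt5_general f g G hG hlower xstar
end
end

section
/- Let M be the n×n ρ-matrix with 0 < ρ < 1, and let Ŝ be τ-nice sampling (uniform over all subsets of [n] of size τ), with 2 ≤ τ ≤ n. Then E[(M_Ŝ)⁻¹] = (τ/n)·A(τ)·I + (τ(τ−1)/(n(n−1)))·B(τ)·(J − I), where A(τ) = ((τ−2)ρ+1)/((1−ρ)((τ−1)ρ+1)), B(τ) = −ρ/((1−ρ)((τ−1)ρ+1)), and J is the all-ones matrix. -/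
/-!
On any index set of size `τ` the `ρ`-matrix is `(1 - ρ) I + ρ J`, and since `J² = τ J` its
inverse is again of the form `a I + b J`: its diagonal entries are `A(τ)` and its off-diagonal
entries `B(τ)`. Hence every `(M_S)⁻¹` with `|S| = τ` is the zero-padding to `S` of one and the
same matrix, and averaging over `S` multiplies its entry `(i, j)` by the probability that
`{i, j} ⊆ Ŝ`, which is `τ / n` for `i = j` and `τ (τ - 1) / (n (n - 1))` otherwise.
-/

open Matrix BigOperators Finset

noncomputable section

lemma submatrix_of_ite_eq {ι κ α : Type*} [DecidableEq ι] [DecidableEq κ] {f : κ → ι}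
    (hf : Function.Injective f) (a b : α) :
    (of fun i j : ι => if i = j then a else b).submatrix f f =
      of fun i j => if i = j then a else b := by
  ext i j
  simp [hf.eq_iff]

section ConstantOffDiagonal

variable {ι K : Type*} [Fintype ι] [DecidableEq ι] [Field K]

omit [Fintype ι] in
lemma of_ite_eq_smul_one_add_smul_ones (a b : K) :
    (of fun i j : ι => if i = j then a else b) =
      (a - b) • (1 : Matrix ι ι K) + b • of fun _ _ => 1 := by
  ext i j
  by_cases h : i = j <;> simp [h, one_apply]

omit [DecidableEq ι] in
lemma ones_mul_ones :
    (of fun (_ _ : ι) => (1 : K)) * of (fun _ _ => 1) =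
      (Fintype.card ι : K) • of fun _ _ => 1 := by
  ext
  simp [mul_apply]

lemma inv_of_ite_eq_one {ρ : K} (h₁ : 1 - ρ ≠ 0)
    (h₂ : ((Fintype.card ι : K) - 1) * ρ + 1 ≠ 0) :
    (of fun i j : ι => if i = j then 1 else ρ)⁻¹ =
      of fun i j => if i = j
        then (((Fintype.card ι : K) - 2) * ρ + 1) /
          ((1 - ρ) * (((Fintype.card ι : K) - 1) * ρ + 1))
        else -ρ / ((1 - ρ) * (((Fintype.card ι : K) - 1) * ρ + 1)) := by
  set m : K := (Fintype.card ι : K)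
  set A := ((m - 2) * ρ + 1) / ((1 - ρ) * ((m - 1) * ρ + 1))
  set B := -ρ / ((1 - ρ) * ((m - 1) * ρ + 1))
  have h_one : (1 - ρ) * (A - B) = 1 := by
    rw [div_sub_div_same, mul_div_assoc', div_eq_one_iff_eq (mul_ne_zero h₁ h₂)]
    ring
  have h_ones : ρ * (A - B) + ((1 - ρ) * B + ρ * B * m) = 0 := by
    simp only [A, B]
    field_simp
    ring
  refine inv_eq_right_inv ?_
  rw [of_ite_eq_smul_one_add_smul_ones, of_ite_eq_smul_one_add_smul_ones]
  simp only [add_mul, mul_add, smul_mul_smul_comm, one_mul, mul_one, ones_mul_ones, smul_smul]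
  rw [add_assoc, ← add_smul, ← add_smul, h_one, h_ones, one_smul, zero_smul, add_zero]

end ConstantOffDiagonal

lemma inPlaceInv_eq_zeroPad {n : ℕ} {M N : Matrix (Fin n) (Fin n) ℝ} {S : Finset (Fin n)}
    (h : (M.submatrix (Subtype.val : S → Fin n) (Subtype.val : S → Fin n))⁻¹ =
      N.submatrix Subtype.val Subtype.val) :
    inPlaceInv M S = zeroPad N S := by
  ext i j
  by_cases hi : i ∈ S <;> by_cases hj : j ∈ S <;>
    simp [inPlaceInv, zeroPad, hi, hj, h]

lemma sum_zeroPad_apply {n : ℕ} (N : Matrix (Fin n) (Fin n) ℝ) (𝒮 : Finset (Finset (Fin n)))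
    (i j : Fin n) :
    (∑ S ∈ 𝒮, zeroPad N S) i j = #{S ∈ 𝒮 | {i, j} ⊆ S} * N i j := by
  rw [Matrix.sum_apply]
  simp only [zeroPad, of_apply, insert_subset_iff, singleton_subset_iff]
  rw [← sum_filter, sum_const, nsmul_eq_mul]

lemma cast_choose_sub_div_choose {K : Type*} [Field K] [CharZero K] {n k s : ℕ} (hsk : s ≤ k)
    (hkn : k ≤ n) :
    ((n - s).choose (k - s) : K) / n.choose k = k.choose s / n.choose s := by
  rw [div_eq_div_iff (by exact_mod_cast (Nat.choose_pos hkn).ne')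
    (by exact_mod_cast (Nat.choose_pos (hsk.trans hkn)).ne')]
  exact_mod_cast by rw [mul_comm, ← Nat.choose_mul hsk, mul_comm]

lemma cast_card_pair_subset_div_choose {n τ : ℕ} (hτ : 2 ≤ τ) (hτn : τ ≤ n)
    (i j : Fin n) :
    (#{S ∈ powersetCard τ univ | {i, j} ⊆ S} : ℝ) / n.choose τ =
      if i = j then (τ : ℝ) / n else τ * (τ - 1) / (n * (n - 1)) := by
  have h_pair : #{i, j} ≤ τ := card_le_two.trans hτ
  rw [card_filter_powersetCard_subset _ _ _ (subset_univ _) h_pair, card_univ, Fintype.card_fin,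
    cast_choose_sub_div_choose h_pair hτn]
  by_cases h : i = j
  · simp [h]
  · rw [if_neg h, card_pair h, Nat.cast_choose_two, Nat.cast_choose_two]
    field_simp

/-- For the `ρ`-matrix and `τ`-nice sampling (uniform over `τ`-subsets),
`E[(M_Ŝ)⁻¹] = (τ/n)A(τ)·I + (τ(τ-1)/(n(n-1)))B(τ)·(J - I)`. -/
theorem stmt13 {n τ : ℕ} (hτ : 2 ≤ τ) (hτn : τ ≤ n)
    (ρ : ℝ) (hρ0 : 0 < ρ) (hρ1 : ρ < 1)
    (M : Matrix (Fin n) (Fin n) ℝ)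
    (hMdef : M = Matrix.of fun i j => if i = j then (1 : ℝ) else ρ)
    (A B : ℝ)
    (hA : A = (((τ : ℝ) - 2) * ρ + 1) / ((1 - ρ) * (((τ : ℝ) - 1) * ρ + 1)))
    (hB : B = -ρ / ((1 - ρ) * (((τ : ℝ) - 1) * ρ + 1))) :
    ((n.choose τ : ℝ))⁻¹ •
        ∑ S ∈ Finset.univ.filter (fun S : Finset (Fin n) => S.card = τ), inPlaceInv M S =
      (((τ : ℝ) / n) * A) • (1 : Matrix (Fin n) (Fin n) ℝ) +
        (((τ : ℝ) * ((τ : ℝ) - 1) / ((n : ℝ) * ((n : ℝ) - 1))) * B) •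
          ((Matrix.of fun _ _ => (1 : ℝ)) - 1) := by
  have h_pos : 0 < ((τ : ℝ) - 1) * ρ + 1 := by
    have : (1 : ℝ) ≤ τ := by exact_mod_cast one_le_two.trans hτ
    positivity
  have h_inv : ∀ S ∈ powersetCard τ univ,
      inPlaceInv M S = zeroPad (of fun i j => if i = j then A else B) S := by
    intro S hS
    have h_card : Fintype.card S = τ := by rw [Fintype.card_coe, mem_powersetCard_univ.1 hS]
    apply inPlaceInv_eq_zeroPad
    rw [hMdef, submatrix_of_ite_eq Subtype.val_injective, submatrix_of_ite_eq Subtype.val_injective,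
      inv_of_ite_eq_one (by linarith) (by rw [h_card]; exact h_pos.ne'), h_card, hA, hB]
  rw [univ_filter_card_eq, sum_congr rfl h_inv]
  ext i j
  rw [Matrix.smul_apply, sum_zeroPad_apply, smul_eq_mul, ← mul_assoc, inv_mul_eq_div,
    cast_card_pair_subset_div_choose hτ hτn]
  by_cases h : i = j <;> simp [h, one_apply]
end
end

section
/- Let M be the n×n ρ-matrix with 0 < ρ < 1 and Ŝ be τ-nice sampling with 2 ≤ τ ≤ n. Then θ := λ_max(M^{1/2}E[(M_Ŝ)⁻¹]M^{1/2}) = (nρ−ρ+1)·(n((τ−1)B(τ))/((n−1)A(τ)) − ((τ−1)B(τ))/((n−1)A(τ)) + 1)·(τA(τ)/n), with A(τ) = ((τ−2)ρ+1)/((1−ρ)((τ−1)ρ+1)) and B(τ) = −ρ/((1−ρ)((τ−1)ρ+1)). -/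
open Matrix BigOperators Finset

noncomputable section

/-- The square root of a positive semidefinite matrix, as `Matrix.PosSemidef.sqrt` was defined
in the older Mathlib. -/
def posSemidefSqrt {n : ℕ} {A : Matrix (Fin n) (Fin n) ℝ} (hA : A.PosSemidef) :
    Matrix (Fin n) (Fin n) ℝ :=
  (hA.1.eigenvectorUnitary : Matrix (Fin n) (Fin n) ℝ) *
    diagonal ((↑) ∘ (Real.sqrt ·) ∘ hA.1.eigenvalues) *
    (star hA.1.eigenvectorUnitary : Matrix (Fin n) (Fin n) ℝ)

/-!
`M = (1 - ρ) I + ρ J` is a combination of the projection `P = J / n` onto the constant vectors and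
of `I - P`, and so are `M^{1/2}`, the average of `(M_S)⁻¹` over `S` and hence `X`: each acts as one
scalar on the constants and as another on their orthogonal complement. Inverting the `τ × τ`
ρ-matrix inside this algebra gives the entries `A, B` of `(M_S)⁻¹`; averaging over the `τ`-subsets
scales the diagonal by `P(i ∈ Ŝ) = τ / n` and the off-diagonal by
`P(i, j ∈ Ŝ) = τ (τ - 1) / (n (n - 1))`. The eigenvalues of `X` are the products of corresponding
scalars, and the one on the constants is the larger.
-/
section ConstSplit

variable {ι : Type*} [Fintype ι]

variable (ι) in
def constProj : Matrix ι ι ℝ := (Fintype.card ι : ℝ)⁻¹ • Matrix.of fun _ _ => 1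

@[simp]
lemma constProj_apply (i j : ι) : constProj ι i j = (Fintype.card ι : ℝ)⁻¹ := by
  simp [constProj]

lemma constProj_mul_self : constProj ι * constProj ι = constProj ι := by
  ext i j
  simp only [mul_apply, constProj_apply, sum_const, card_univ, nsmul_eq_mul]
  rcases eq_or_ne (Fintype.card ι : ℝ) 0 with h | h
  · simp [h]
  · field_simp

lemma constProj_conjTranspose : (constProj ι)ᴴ = constProj ι := by
  ext i j
  simp

lemma constProj_mulVec_one [Nonempty ι] : constProj ι *ᵥ 1 = 1 := by
  ext i
  simp [mulVec, dotProduct]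

variable [DecidableEq ι]

variable (ι) in
/-- The matrix acting as `a` on constant vectors and as `b` on their orthogonal complement. -/
def constSplit (a b : ℝ) : Matrix ι ι ℝ := a • constProj ι + b • (1 - constProj ι)

lemma constSplit_mul (a b c d : ℝ) :
    constSplit ι a b * constSplit ι c d = constSplit ι (a * c) (b * d) := by
  have hPQ : constProj ι * (1 - constProj ι) = 0 := by
    rw [Matrix.mul_sub, Matrix.mul_one, constProj_mul_self, sub_self]
  have hQP : (1 - constProj ι) * constProj ι = 0 := by
    rw [Matrix.sub_mul, Matrix.one_mul, constProj_mul_self, sub_self]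
  have hQQ : (1 - constProj ι) * (1 - constProj ι) = 1 - constProj ι := by
    rw [Matrix.mul_sub, Matrix.mul_one, hQP, sub_zero]
  simp only [constSplit, Matrix.add_mul, Matrix.mul_add, Matrix.smul_mul, Matrix.mul_smul,
    constProj_mul_self, hPQ, hQP, hQQ, smul_zero, add_zero, zero_add, smul_smul]
  module

lemma constSplit_self (a : ℝ) : constSplit ι a a = a • 1 := by
  simp only [constSplit, ← smul_add, add_sub_cancel]

lemma constSplit_sub (a b c d : ℝ) :
    constSplit ι a b - constSplit ι c d = constSplit ι (a - c) (b - d) := by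
  simp only [constSplit, sub_smul]
  abel

lemma constSplit_inv {a b : ℝ} (ha : a ≠ 0) (hb : b ≠ 0) :
    (constSplit ι a b)⁻¹ = constSplit ι a⁻¹ b⁻¹ :=
  inv_eq_right_inv <| by
    rw [constSplit_mul, mul_inv_cancel₀ ha, mul_inv_cancel₀ hb, constSplit_self, one_smul]

lemma constSplit_apply (a b : ℝ) (i j : ι) :
    constSplit ι a b i j = (if i = j then b else 0) + (a - b) / Fintype.card ι := by
  simp only [constSplit, Matrix.add_apply, Matrix.smul_apply, Matrix.sub_apply, one_apply,
    constProj_apply, smul_eq_mul]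
  split_ifs <;> ring

lemma of_ite_eq_constSplit [Nonempty ι] (x y : ℝ) :
    (Matrix.of fun i j : ι => if i = j then x else y)
      = constSplit ι (x + (Fintype.card ι - 1) * y) (x - y) := by
  have hcard : (Fintype.card ι : ℝ) ≠ 0 := Nat.cast_ne_zero.2 Fintype.card_ne_zero
  ext i j
  rw [constSplit_apply, of_apply]
  split_ifs <;> field_simp <;> ring

lemma constSplit_posSemidef {a b : ℝ} (ha : 0 ≤ a) (hb : 0 ≤ b) :
    (constSplit ι a b).PosSemidef := by
  have hP : (constProj ι).PosSemidef := by
    simpa only [constProj_conjTranspose, constProj_mul_self] using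
      posSemidef_conjTranspose_mul_self (constProj ι)
  have hQ : (1 - constProj ι).PosSemidef := by
    have hQQ : (1 - constProj ι) * (1 - constProj ι) = 1 - constProj ι := by
      rw [Matrix.mul_sub, Matrix.mul_one, Matrix.sub_mul, Matrix.one_mul, constProj_mul_self,
        sub_self, sub_zero]
    have hQh : (1 - constProj ι)ᴴ = 1 - constProj ι := by
      rw [conjTranspose_sub, conjTranspose_one, constProj_conjTranspose]
    have := posSemidef_conjTranspose_mul_self (1 - constProj ι)
    rwa [hQh, hQQ] at this
  exact (hP.smul ha).add (hQ.smul hb)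

lemma constSplit_mulVec_one [Nonempty ι] (a b : ℝ) : constSplit ι a b *ᵥ 1 = a • 1 := by
  simp [constSplit, add_mulVec, smul_mulVec, sub_mulVec, constProj_mulVec_one]

lemma Matrix.IsHermitian.eigenvalues_eq_or_eq_of_eq_constSplit {X : Matrix ι ι ℝ}
    (hX : X.IsHermitian) {a b : ℝ} (hXab : X = constSplit ι a b) (i : ι) :
    hX.eigenvalues i = a ∨ hX.eigenvalues i = b := by
  set μ := hX.eigenvalues i
  set v : ι → ℝ := ⇑(hX.eigenvectorBasis i)
  have hv : X *ᵥ v = μ • v := hX.mulVec_eigenvectorBasis i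
  have hv0 : v ≠ 0 := fun h => (hX.eigenvectorBasis.orthonormal.ne_zero i) (by
    ext k; exact congrFun h k)
  -- `X` is annihilated by `(t - a) (t - b)`, and so is each of its eigenvalues.
  have hann : (X - a • 1) * (X - b • 1) = 0 := by
    rw [hXab, ← constSplit_self, ← constSplit_self, constSplit_sub, constSplit_sub,
      constSplit_mul, sub_self, sub_self, zero_mul, mul_zero, constSplit_self, zero_smul]
  have hμ : ((μ - a) * (μ - b)) • v = 0 := by
    have := congrArg (· *ᵥ v) hann
    simp only [← mulVec_mulVec, sub_mulVec, smul_mulVec, one_mulVec, hv, zero_mulVec,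
      mulVec_sub, mulVec_smul] at this
    rw [← this, mul_smul]
    module
  rcases mul_eq_zero.1 ((smul_eq_zero.1 hμ).resolve_right hv0) with h | h
  · exact .inl (sub_eq_zero.1 h)
  · exact .inr (sub_eq_zero.1 h)

lemma Matrix.IsHermitian.iSup_eigenvalues_of_eq_constSplit [Nonempty ι] {X : Matrix ι ι ℝ}
    (hX : X.IsHermitian) {a b : ℝ} (hXab : X = constSplit ι a b) (hba : b ≤ a) :
    (⨆ i, hX.eigenvalues i) = a := by
  have ha : a ∈ Set.range hX.eigenvalues := by
    rw [← hX.spectrum_real_eq_range_eigenvalues, ← spectrum_toLin',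
      ← Module.End.hasEigenvalue_iff_mem_spectrum]
    refine Module.End.hasEigenvalue_of_hasEigenvector (x := 1) ⟨?_, one_ne_zero⟩
    rw [Module.End.mem_eigenspace_iff, toLin'_apply, hXab, constSplit_mulVec_one]
  obtain ⟨i₀, hi₀⟩ := ha
  refine le_antisymm (ciSup_le fun i => ?_) (hi₀ ▸ le_ciSup (Set.finite_range _).bddAbove i₀)
  rcases hX.eigenvalues_eq_or_eq_of_eq_constSplit hXab i with h | h <;> rw [h]
  exact hba

end ConstSplit

open scoped MatrixOrder in
lemma posSemidefSqrt_eq_of_mul_self {n : ℕ} {A N : Matrix (Fin n) (Fin n) ℝ}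
    (hA : A.PosSemidef) (hN : N.PosSemidef) (hNA : N * N = A) : posSemidefSqrt hA = N := by
  have hcfc : posSemidefSqrt hA = cfc Real.sqrt A := by rw [hA.1.cfc_eq]; rfl
  rw [hcfc, ← cfcₙ_eq_cfc, ← CFC.sqrt_eq_real_sqrt A hA.nonneg, CFC.sqrt_unique hNA hN.nonneg]

lemma posSemidefSqrt_eq_constSplit {n : ℕ} {A : Matrix (Fin n) (Fin n) ℝ} (hA : A.PosSemidef)
    {a b : ℝ} (hAab : A = constSplit (Fin n) a b) (ha : 0 ≤ a) (hb : 0 ≤ b) :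
    posSemidefSqrt hA = constSplit (Fin n) √a √b :=
  posSemidefSqrt_eq_of_mul_self hA
    (constSplit_posSemidef (Real.sqrt_nonneg a) (Real.sqrt_nonneg b))
    (by rw [constSplit_mul, Real.mul_self_sqrt ha, Real.mul_self_sqrt hb, hAab])

lemma inv_of_ite_one {ι : Type*} [Fintype ι] [DecidableEq ι] [Nonempty ι] {ρ : ℝ} (hρ : ρ ≠ 1)
    (hcardρ : ((Fintype.card ι : ℝ) - 1) * ρ + 1 ≠ 0) :
    (Matrix.of fun i j : ι => if i = j then (1 : ℝ) else ρ)⁻¹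
      = Matrix.of fun i j => if i = j
        then (((Fintype.card ι : ℝ) - 2) * ρ + 1) /
          ((1 - ρ) * (((Fintype.card ι : ℝ) - 1) * ρ + 1))
        else -ρ / ((1 - ρ) * (((Fintype.card ι : ℝ) - 1) * ρ + 1)) := by
  have hcard : (Fintype.card ι : ℝ) ≠ 0 := Nat.cast_ne_zero.2 Fintype.card_ne_zero
  have h1ρ : 1 - ρ ≠ 0 := sub_ne_zero.2 hρ.symm
  have hcardρ' : ρ * ((Fintype.card ι : ℝ) - 1) + 1 ≠ 0 := by rwa [mul_comm]
  rw [of_ite_eq_constSplit, add_comm (1 : ℝ), constSplit_inv hcardρ h1ρ]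
  ext i j
  rw [constSplit_apply, of_apply]
  split_ifs <;> field_simp <;> ring

lemma inPlaceInv_of_ite_one {n τ : ℕ} {ρ : ℝ} (hρ : ρ ≠ 1) (hτρ : ((τ : ℝ) - 1) * ρ + 1 ≠ 0)
    {S : Finset (Fin n)} (hS : S.card = τ) (hτ : 0 < τ) :
    inPlaceInv (Matrix.of fun i j => if i = j then (1 : ℝ) else ρ) S
      = zeroPad (Matrix.of fun i j => if i = j
          then (((τ : ℝ) - 2) * ρ + 1) / ((1 - ρ) * (((τ : ℝ) - 1) * ρ + 1))
          else -ρ / ((1 - ρ) * (((τ : ℝ) - 1) * ρ + 1))) S := by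
  have hsub : (Matrix.of fun i j : Fin n => if i = j then (1 : ℝ) else ρ).submatrix
      (fun a : S => (a : Fin n)) (fun a : S => (a : Fin n))
      = Matrix.of fun a b : S => if a = b then (1 : ℝ) else ρ := by
    ext a b
    simp
  have : Nonempty S := (card_pos.1 (hS ▸ hτ)).to_subtype
  have hcard : Fintype.card S = τ := by rw [Fintype.card_coe, hS]
  ext i j
  simp only [inPlaceInv, zeroPad, of_apply, hsub]
  rw [inv_of_ite_one hρ (by rwa [hcard]), hcard]
  by_cases hi : i ∈ S <;> by_cases hj : j ∈ S <;> simp [hi, hj]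

lemma card_filter_card_eq_and_subset {α : Type*} [Fintype α] [DecidableEq α] (T : Finset α)
    {τ : ℕ} (hT : #T ≤ τ) :
    #{S : Finset α | #S = τ ∧ T ⊆ S} = (Fintype.card α - #T).choose (τ - #T) := by
  rw [← card_compl T, ← card_powersetCard (τ - #T) Tᶜ]
  refine card_nbij' (fun S => S \ T) (fun U => U ∪ T) ?_ ?_ ?_ ?_
  · intro S hS
    simp only [coe_filter, mem_univ, true_and, Set.mem_ofPred_eq] at hS
    simp [card_sdiff_of_subset hS.2, hS.1]
  · intro U hU
    simp only [mem_coe, mem_powersetCard, subset_compl_iff_disjoint_right] at hU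
    simp [card_union_of_disjoint hU.1, hU.2, Nat.sub_add_cancel hT]
  · intro S hS
    simp only [coe_filter, mem_univ, true_and, Set.mem_ofPred_eq] at hS
    exact sdiff_union_of_subset hS.2
  · intro U hU
    simp only [mem_coe, mem_powersetCard, subset_compl_iff_disjoint_right] at hU
    exact union_sdiff_cancel_right hU.1

lemma card_filter_card_eq_and_subset_div_choose {α : Type*} [Fintype α] [DecidableEq α]
    (T : Finset α) {τ : ℕ} (hT : #T ≤ τ) (hτ : τ ≤ Fintype.card α) :
    (#{S : Finset α | #S = τ ∧ T ⊆ S} : ℝ) / (Fintype.card α).choose τ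
      = τ.choose #T / (Fintype.card α).choose #T := by
  have hpos : ∀ k ≤ Fintype.card α, ((Fintype.card α).choose k : ℝ) ≠ 0 := fun k hk =>
    Nat.cast_ne_zero.2 (Nat.choose_pos hk).ne'
  rw [card_filter_card_eq_and_subset T hT, div_eq_div_iff (hpos τ hτ) (hpos _ (hT.trans hτ)),
    mul_comm, mul_comm (τ.choose #T : ℝ)]
  exact_mod_cast (Nat.choose_mul hT).symm

lemma cast_choose_card_pair_div {α : Type*} [DecidableEq α] (τ n : ℕ) (i j : α) :
    (τ.choose #{i, j} : ℝ) / n.choose #{i, j}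
      = if i = j then (τ : ℝ) / n else (τ : ℝ) * (τ - 1) / (n * (n - 1)) := by
  split_ifs with hij
  · simp [hij]
  · rw [card_pair hij, Nat.cast_choose_two, Nat.cast_choose_two,
      div_div_div_cancel_right₀ two_ne_zero]

lemma smul_sum_zeroPad_filter_card_eq {n τ : ℕ} (C : Matrix (Fin n) (Fin n) ℝ) (hτ : 2 ≤ τ)
    (hτn : τ ≤ n) :
    ((n.choose τ : ℝ))⁻¹ • ∑ S ∈ univ.filter (fun S : Finset (Fin n) => S.card = τ), zeroPad C S
      = Matrix.of fun i j => (τ.choose #{i, j} : ℝ) / n.choose #{i, j} * C i j := by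
  ext i j
  have hpair : ∀ S : Finset (Fin n), i ∈ S ∧ j ∈ S ↔ {i, j} ⊆ S := fun S => by
    rw [insert_subset_iff, singleton_subset_iff]
  have hcard : #{i, j} ≤ τ := (card_le_two).trans hτ
  simp only [Matrix.smul_apply, Matrix.sum_apply, zeroPad, of_apply, hpair, ← sum_filter,
    filter_filter, sum_const, nsmul_eq_mul, smul_eq_mul]
  rw [← mul_assoc, inv_mul_eq_div]
  congr 1
  simpa using card_filter_card_eq_and_subset_div_choose {i, j} hcard (by simpa using hτn)

lemma smul_sum_inPlaceInv_of_ite_one {n τ : ℕ} {ρ A B : ℝ} (hτ : 2 ≤ τ) (hτn : τ ≤ n)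
    (hρ : ρ ≠ 1) (hτρ : ((τ : ℝ) - 1) * ρ + 1 ≠ 0)
    (hA : A = (((τ : ℝ) - 2) * ρ + 1) / ((1 - ρ) * (((τ : ℝ) - 1) * ρ + 1)))
    (hB : B = -ρ / ((1 - ρ) * (((τ : ℝ) - 1) * ρ + 1))) :
    ((n.choose τ : ℝ))⁻¹ • ∑ S ∈ univ.filter (fun S : Finset (Fin n) => S.card = τ),
        inPlaceInv (Matrix.of fun i j => if i = j then (1 : ℝ) else ρ) S
      = Matrix.of fun i j =>
          if i = j then (τ : ℝ) / n * A else (τ : ℝ) * (τ - 1) / (n * (n - 1)) * B := by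
  have hinv : ∀ S ∈ univ.filter (fun S : Finset (Fin n) => S.card = τ),
      inPlaceInv (Matrix.of fun i j => if i = j then (1 : ℝ) else ρ) S
        = zeroPad (Matrix.of fun i j => if i = j then A else B) S := fun S hS => by
    rw [inPlaceInv_of_ite_one hρ hτρ (mem_filter.1 hS).2 (by omega), hA, hB]
  rw [sum_congr rfl hinv, smul_sum_zeroPad_filter_card_eq _ hτ hτn]
  ext i j
  simp only [of_apply, cast_choose_card_pair_div]
  split_ifs <;> rfl

-- The eigenvalue off the constants is at most the one on the constants.
lemma rhoNice_eigenvalue_le {n τ ρ A B : ℝ} (hτ : 2 ≤ τ) (hτn : τ ≤ n) (hρ0 : 0 ≤ ρ) (hρ1 : ρ < 1)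
    (hA : A = ((τ - 2) * ρ + 1) / ((1 - ρ) * ((τ - 1) * ρ + 1)))
    (hB : B = -ρ / ((1 - ρ) * ((τ - 1) * ρ + 1))) :
    (1 - ρ) * (τ / n * A - τ * (τ - 1) / (n * (n - 1)) * B)
      ≤ (1 + (n - 1) * ρ) * (τ / n * A + (n - 1) * (τ * (τ - 1) / (n * (n - 1)) * B)) := by
  have hn : 0 < n := by linarith
  have hn1 : 0 < n - 1 := by linarith
  have h1ρ : 0 < 1 - ρ := by linarith
  have hτρ : 0 < (τ - 1) * ρ + 1 := by nlinarith
  have key : (1 + (n - 1) * ρ) * (τ / n * A + (n - 1) * (τ * (τ - 1) / (n * (n - 1)) * B))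
      - (1 - ρ) * (τ / n * A - τ * (τ - 1) / (n * (n - 1)) * B)
      = τ * ρ * ((n - 1) * (n - τ + 1) - (τ - 1)) / (n * (n - 1) * ((τ - 1) * ρ + 1)) := by
    rw [hA, hB]
    field_simp
    ring
  have hgap : 0 ≤ (n - 1) * (n - τ + 1) - (τ - 1) := by nlinarith
  rw [← sub_nonneg, key]
  exact div_nonneg (mul_nonneg (mul_nonneg (by linarith) hρ0) hgap) (by positivity)

/-- For the `ρ`-matrix with `τ`-nice sampling,
`θ = λmax(M^{1/2} E[(M_Ŝ)⁻¹] M^{1/2})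
   = (nρ-ρ+1)(n(τ-1)B/((n-1)A) - (τ-1)B/((n-1)A) + 1)·τA/n`. -/
theorem stmt15 {n τ : ℕ} (hτ : 2 ≤ τ) (hτn : τ ≤ n)
    (ρ : ℝ) (hρ0 : 0 < ρ) (hρ1 : ρ < 1)
    (M : Matrix (Fin n) (Fin n) ℝ)
    (hMdef : M = Matrix.of fun i j => if i = j then (1 : ℝ) else ρ)
    (hM : M.PosDef)
    (A B : ℝ)
    (hA : A = (((τ : ℝ) - 2) * ρ + 1) / ((1 - ρ) * (((τ : ℝ) - 1) * ρ + 1)))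
    (hB : B = -ρ / ((1 - ρ) * (((τ : ℝ) - 1) * ρ + 1)))
    (X : Matrix (Fin n) (Fin n) ℝ)
    (hXdef : X = posSemidefSqrt hM.posSemidef *
      (((n.choose τ : ℝ))⁻¹ •
        ∑ S ∈ Finset.univ.filter (fun S : Finset (Fin n) => S.card = τ), inPlaceInv M S) *
      posSemidefSqrt hM.posSemidef)
    (hX : X.IsHermitian) :
    (⨆ i, hX.eigenvalues i) =
      ((n : ℝ) * ρ - ρ + 1) *
        ((n : ℝ) * (((τ : ℝ) - 1) * B) / (((n : ℝ) - 1) * A) -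
          ((τ : ℝ) - 1) * B / (((n : ℝ) - 1) * A) + 1) * ((τ : ℝ) * A / n) := by
  have : Nonempty (Fin n) := ⟨⟨0, by omega⟩⟩
  have hτR : (2 : ℝ) ≤ τ := by exact_mod_cast hτ
  have hτnR : (τ : ℝ) ≤ n := by exact_mod_cast hτn
  have hτρ : 0 < ((τ : ℝ) - 1) * ρ + 1 := by nlinarith
  have hm₁ : 0 ≤ 1 + ((n : ℝ) - 1) * ρ := by nlinarith
  set p₁ : ℝ := τ / n
  set p₂ : ℝ := τ * (τ - 1) / (n * (n - 1))
  have hMsplit : M = constSplit (Fin n) (1 + (n - 1) * ρ) (1 - ρ) := by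
    rw [hMdef, of_ite_eq_constSplit, Fintype.card_fin]
  have hE : ((n.choose τ : ℝ))⁻¹ •
      ∑ S ∈ Finset.univ.filter (fun S : Finset (Fin n) => S.card = τ), inPlaceInv M S
      = constSplit (Fin n) (p₁ * A + (n - 1) * (p₂ * B)) (p₁ * A - p₂ * B) := by
    rw [hMdef, smul_sum_inPlaceInv_of_ite_one hτ hτn hρ1.ne hτρ.ne' hA hB, of_ite_eq_constSplit,
      Fintype.card_fin]
  have hXsplit : X = constSplit (Fin n) ((1 + (n - 1) * ρ) * (p₁ * A + (n - 1) * (p₂ * B)))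
      ((1 - ρ) * (p₁ * A - p₂ * B)) := by
    rw [hXdef, posSemidefSqrt_eq_constSplit _ hMsplit hm₁ (by linarith), hE, constSplit_mul,
      constSplit_mul, mul_right_comm √_, mul_right_comm √(1 - ρ), Real.mul_self_sqrt hm₁,
      Real.mul_self_sqrt (by linarith)]
  rw [hX.iSup_eigenvalues_of_eq_constSplit hXsplit
    (rhoNice_eigenvalue_le hτR hτnR hρ0.le hρ1 hA hB)]
  have hA0 : A ≠ 0 := hA ▸ div_ne_zero (by nlinarith) (mul_pos (by linarith) hτρ).ne'
  have hn1 : (n : ℝ) - 1 ≠ 0 := by linarith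
  have hn : (n : ℝ) ≠ 0 := by linarith
  simp only [p₁, p₂]
  field_simp
  ring
end
end
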